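/- If a class H of subsets of a set X has VC dimension d, then the class of pairwise intersections {A ∩ B : A, B ∈ H} has VC dimension at most 10d. -/

import Mathlib

/-- A family `H` of subsets of `α` shatters a finite set `S` if every subset of `S`
is cut out by some member of `H`. -/
def ShattersFam {α : Type*} (H : Set (Set α)) (S : Finset α) : Prop :=
  ∀ T ⊆ S, ∃ A ∈ H, ∀ x ∈ S, (x ∈ A ↔ x ∈ T)


open Finset

lemma two_pow_le_two_mul_factorial : ∀ i : ℕ, 2 ^ i ≤ 2 * i.factorial
  | 0 => by norm_num
  | 1 => by norm_num [Nat.factorial]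
  | (i+2) => by
      have ih := two_pow_le_two_mul_factorial (i+1)
      calc 2 ^ (i+2) = 2 * 2 ^ (i+1) := by ring
        _ ≤ 2 * (2 * (i+1).factorial) := by omega
        _ ≤ 2 * ((i+2) * (i+1).factorial) := by
            have h2 : 2 ≤ i + 2 := by omega
            exact Nat.mul_le_mul_left _ (Nat.mul_le_mul_right _ h2)
        _ = 2 * (i+2).factorial := by
            simp [Nat.factorial_succ]

lemma sum_two_pow (n : ℕ) : ∑ i ∈ range n, 2 ^ i = 2 ^ n - 1 := by
  induction n with
  | zero => simp
  | succ n ih =>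
      rw [Finset.sum_range_succ, ih]
      have h1 : 1 ≤ 2 ^ n := Nat.one_le_two_pow
      have h2 : (2:ℕ) ^ (n+1) = 2 * 2 ^ n := by ring
      omega

lemma binom_expand (m n : ℕ) :
    (m + 1) ^ n = ∑ i ∈ range (n+1), m ^ (n - i) * n.choose i := by
  have h0 : (m + 1) ^ n = ∑ i ∈ range (n+1), m ^ i * n.choose i := by
    simpa using add_pow m 1 n
  have hrefl := Finset.sum_range_reflect (fun i => m ^ i * n.choose i) (n+1)
  rw [h0, ← hrefl]
  apply Finset.sum_congr rfl
  intro i hi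
  rw [mem_range] at hi
  have hin : i ≤ n := by omega
  have he : n + 1 - 1 - i = n - i := by omega
  simp only [he]
  rw [Nat.choose_symm hin]

-- B1 : (m+1)^n ≤ 3 m^n for n ≤ m
lemma succ_pow_le_three_mul (n m : ℕ) (h : n ≤ m) : (m + 1) ^ n ≤ 3 * m ^ n := by
  have key : ∀ i, i ≤ n → i ≠ 0 →
      2 ^ n * (m ^ (n - i) * n.choose i) ≤ 2 ^ (n - i) * (2 * m ^ n) := by
    intro i hin hi0
    have h1 : 2 ^ i * n.choose i ≤ 2 * m ^ i := by
      calc 2 ^ i * n.choose i ≤ 2 * i.factorial * n.choose i :=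
            Nat.mul_le_mul_right _ (two_pow_le_two_mul_factorial i)
        _ = 2 * (i.factorial * n.choose i) := by ring
        _ = 2 * n.descFactorial i := by rw [Nat.descFactorial_eq_factorial_mul_choose]
        _ ≤ 2 * n ^ i := Nat.mul_le_mul_left _ (Nat.descFactorial_le_pow n i)
        _ ≤ 2 * m ^ i := Nat.mul_le_mul_left _ (Nat.pow_le_pow_left h i)
    have e2 : (2:ℕ) ^ n = 2 ^ (n - i) * 2 ^ i := by
      rw [← pow_add, Nat.sub_add_cancel hin]
    have em : m ^ n = m ^ (n - i) * m ^ i := by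
      rw [← pow_add, Nat.sub_add_cancel hin]
    calc 2 ^ n * (m ^ (n - i) * n.choose i)
        = 2 ^ (n - i) * (m ^ (n - i) * (2 ^ i * n.choose i)) := by rw [e2]; ring
      _ ≤ 2 ^ (n - i) * (m ^ (n - i) * (2 * m ^ i)) :=
          Nat.mul_le_mul_left _ (Nat.mul_le_mul_left _ h1)
      _ = 2 ^ (n - i) * (2 * m ^ n) := by rw [em]; ring
  have main : 2 ^ n * (m + 1) ^ n ≤ 2 ^ n * (3 * m ^ n) := by
    rw [binom_expand m n, Finset.mul_sum]
    rw [Finset.sum_range_succ' (fun i => 2 ^ n * (m ^ (n - i) * n.choose i)) n]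
    simp only [Nat.sub_zero, Nat.choose_zero_right, mul_one]
    have tb : ∑ i ∈ range n, 2 ^ n * (m ^ (n - (i+1)) * n.choose (i+1))
        ≤ ∑ i ∈ range n, 2 ^ (n - (i+1)) * (2 * m ^ n) := by
      apply Finset.sum_le_sum
      intro i hi
      rw [mem_range] at hi
      exact key (i+1) (by omega) (by omega)
    have geo : ∑ i ∈ range n, 2 ^ (n - (i+1)) * (2 * m ^ n) ≤ 2 * (2 ^ n * m ^ n) := by
      rw [← Finset.sum_mul]
      have hrefl : ∑ i ∈ range n, 2 ^ (n - (i+1)) = ∑ i ∈ range n, 2 ^ i := by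
        rw [← Finset.sum_range_reflect (fun i => 2 ^ i) n]
        apply Finset.sum_congr rfl
        intro i hi
        rw [mem_range] at hi
        congr 1
        omega
      rw [hrefl, sum_two_pow]
      have h1 : 1 ≤ 2 ^ n := Nat.one_le_two_pow
      calc (2 ^ n - 1) * (2 * m ^ n) ≤ 2 ^ n * (2 * m ^ n) :=
            Nat.mul_le_mul_right _ (by omega)
        _ = 2 * (2 ^ n * m ^ n) := by ring
    calc (∑ i ∈ range n, 2 ^ n * (m ^ (n - (i+1)) * n.choose (i+1))) + 2 ^ n * m ^ n
        ≤ 2 * (2 ^ n * m ^ n) + 2 ^ n * m ^ n := by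
          have := le_trans tb geo
          omega
      _ = 2 ^ n * (3 * m ^ n) := by ring
  exact Nat.le_of_mul_le_mul_left main (Nat.pow_pos (by norm_num))

-- B : (n+d)^n ≤ 3^d n^n for d ≤ n
lemma add_pow_le_three_pow_mul (n : ℕ) : ∀ d, d ≤ n → (n + d) ^ n ≤ 3 ^ d * n ^ n := by
  intro d
  induction d with
  | zero => simp
  | succ d ih =>
      intro hd
      have h1 : n ≤ n + d := Nat.le_add_right n d
      calc (n + (d+1)) ^ n = ((n + d) + 1) ^ n := by ring_nf
        _ ≤ 3 * (n + d) ^ n := succ_pow_le_three_mul n (n + d) h1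
        _ ≤ 3 * (3 ^ d * n ^ n) := Nat.mul_le_mul_left _ (ih (by omega))
        _ = 3 ^ (d+1) * n ^ n := by ring

lemma sum_five_pow : ∀ k : ℕ, ∑ i ∈ Finset.range (k+1), 5 ^ i ≤ 2 * 5 ^ k
  | 0 => by simp
  | (k+1) => by
      rw [Finset.sum_range_succ]
      have ih := sum_five_pow k
      have h2 : (5:ℕ) ^ (k+1) = 5 * 5 ^ k := by ring
      omega

-- C : (n+1)^k ≤ 2 n^k for 5k ≤ n
lemma succ_pow_le_two_mul (k n : ℕ) (h : 5 * k ≤ n) : (n + 1) ^ k ≤ 2 * n ^ k := by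
  rcases Nat.eq_zero_or_pos k with hk | hk
  · subst hk; simp
  have key : ∀ i, i ≤ k → 5 ^ k * (n ^ (k - i) * k.choose i) ≤ 5 ^ (k - i) * n ^ k := by
    intro i hik
    have h1 : 5 ^ i * k.choose i ≤ n ^ i := by
      calc 5 ^ i * k.choose i ≤ 5 ^ i * k ^ i :=
            Nat.mul_le_mul_left _ (Nat.choose_le_pow _ _)
        _ = (5 * k) ^ i := by rw [mul_pow]
        _ ≤ n ^ i := Nat.pow_le_pow_left h i
    have e5 : (5:ℕ) ^ k = 5 ^ (k - i) * 5 ^ i := by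
      rw [← pow_add, Nat.sub_add_cancel hik]
    have en : n ^ k = n ^ (k - i) * n ^ i := by
      rw [← pow_add, Nat.sub_add_cancel hik]
    calc 5 ^ k * (n ^ (k - i) * k.choose i)
        = 5 ^ (k - i) * (n ^ (k - i) * (5 ^ i * k.choose i)) := by rw [e5]; ring
      _ ≤ 5 ^ (k - i) * (n ^ (k - i) * n ^ i) :=
          Nat.mul_le_mul_left _ (Nat.mul_le_mul_left _ h1)
      _ = 5 ^ (k - i) * n ^ k := by rw [en]
  have main : 5 ^ k * (n + 1) ^ k ≤ 5 ^ k * (2 * n ^ k) := by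
    rw [binom_expand n k, Finset.mul_sum]
    have tb : ∑ i ∈ range (k+1), 5 ^ k * (n ^ (k - i) * k.choose i)
        ≤ ∑ i ∈ range (k+1), 5 ^ (k - i) * n ^ k := by
      apply Finset.sum_le_sum
      intro i hi
      rw [mem_range] at hi
      exact key i (by omega)
    refine le_trans tb ?_
    rw [← Finset.sum_mul]
    have hrefl : ∑ i ∈ range (k+1), 5 ^ (k - i) = ∑ i ∈ range (k+1), 5 ^ i := by
      rw [← Finset.sum_range_reflect (fun i => 5 ^ i) (k+1)]
      apply Finset.sum_congr rfl
      intro i hi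
      rw [mem_range] at hi
      congr 1 <;> omega
    rw [hrefl]
    calc (∑ i ∈ range (k+1), 5 ^ i) * n ^ k ≤ 2 * 5 ^ k * n ^ k :=
          Nat.mul_le_mul_right _ (sum_five_pow k)
      _ = 5 ^ k * (2 * n ^ k) := by ring
  exact Nat.le_of_mul_le_mul_left main (Nat.pow_pos (by norm_num))

-- A : d^d n^(n-d) * ∑_{i≤d} C(n,i) ≤ (n+d)^n for d ≤ n
lemma sum_choose_bound (n d : ℕ) (hdn : d ≤ n) :
    d ^ d * n ^ (n - d) * ∑ i ∈ range (d+1), n.choose i ≤ (n + d) ^ n := by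
  have expand : (n + d) ^ n = ∑ i ∈ range (n+1), d ^ i * n ^ (n - i) * n.choose i := by
    have h := add_pow d n n
    rw [Nat.add_comm n d, h]
    apply Finset.sum_congr rfl
    intro i hi
    push_cast
    ring
  rw [expand, Finset.mul_sum]
  have hsub : range (d+1) ⊆ range (n+1) := by
    intro x hx; rw [mem_range] at *; omega
  refine le_trans ?_ (Finset.sum_le_sum_of_subset hsub)
  apply Finset.sum_le_sum
  intro i hi
  rw [mem_range] at hi
  have hid : i ≤ d := by omega
  have e1 : d ^ d = d ^ i * d ^ (d - i) := by
    rw [← pow_add, Nat.add_sub_cancel' hid]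
  have e2 : n ^ (n - i) = n ^ (d - i) * n ^ (n - d) := by
    rw [← pow_add]
    congr 1
    omega
  calc d ^ d * n ^ (n - d) * n.choose i
      = d ^ i * (d ^ (d - i) * n ^ (n - d)) * n.choose i := by rw [e1]; ring
    _ ≤ d ^ i * (n ^ (d - i) * n ^ (n - d)) * n.choose i := by
        gcongr <;> omega
    _ = d ^ i * n ^ (n - i) * n.choose i := by rw [e2]

lemma key_lt (d : ℕ) (hd : 1 ≤ d) :
    ∀ n, 10 * d + 1 ≤ n → (3 * n) ^ (2 * d) < d ^ (2 * d) * 2 ^ n := by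
  refine Nat.le_induction ?_ ?_
  · -- base case n = 10*d+1
    rcases Nat.lt_or_ge d 3 with h3 | h3
    · interval_cases d <;> norm_num
    · have h31 : 3 * (10 * d + 1) ≤ 31 * d := by omega
      have hdpos : 0 < d ^ (2 * d) := Nat.pow_pos (by omega)
      calc (3 * (10 * d + 1)) ^ (2 * d) ≤ (31 * d) ^ (2 * d) :=
            Nat.pow_le_pow_left h31 _
        _ = 31 ^ (2 * d) * d ^ (2 * d) := mul_pow _ _ _
        _ = 961 ^ d * d ^ (2 * d) := by
            rw [pow_mul]; norm_num
        _ < 1024 ^ d * d ^ (2 * d) := by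
            have : (961:ℕ) ^ d < 1024 ^ d :=
              Nat.pow_lt_pow_left (by norm_num) (by omega)
            exact (Nat.mul_lt_mul_right hdpos).mpr this
        _ = d ^ (2 * d) * 2 ^ (10 * d) := by
            rw [show (1024:ℕ) = 2 ^ 10 by norm_num, ← pow_mul]
            ring
        _ ≤ d ^ (2 * d) * 2 ^ (10 * d + 1) := by
            exact Nat.mul_le_mul_left _ (Nat.pow_le_pow_right (by norm_num) (by omega))
  · intro n hn ih
    have hC : (n + 1) ^ (2 * d) ≤ 2 * n ^ (2 * d) :=
      succ_pow_le_two_mul (2 * d) n (by omega)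
    calc (3 * (n + 1)) ^ (2 * d) = 3 ^ (2 * d) * (n + 1) ^ (2 * d) := mul_pow _ _ _
      _ ≤ 3 ^ (2 * d) * (2 * n ^ (2 * d)) := Nat.mul_le_mul_left _ hC
      _ = 2 * (3 ^ (2 * d) * n ^ (2 * d)) := by ring
      _ = 2 * (3 * n) ^ (2 * d) := by rw [mul_pow]
      _ < 2 * (d ^ (2 * d) * 2 ^ n) := by
          have h2 : (0:ℕ) < 2 := by norm_num
          exact (Nat.mul_lt_mul_left h2).mpr ih
      _ = d ^ (2 * d) * 2 ^ (n + 1) := by rw [pow_succ]; ring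

-- main arithmetic lemma
lemma le_ten_mul_of_two_pow_le (n d : ℕ)
    (h : 2 ^ n ≤ (∑ i ∈ range (d+1), n.choose i) ^ 2) : n ≤ 10 * d := by
  by_contra hcon
  push_neg at hcon
  have hn : 10 * d + 1 ≤ n := by omega
  rcases Nat.eq_zero_or_pos d with hd0 | hd
  · subst hd0
    simp only [Nat.zero_add, Finset.range_one, Finset.sum_singleton,
      Nat.choose_zero_right] at h
    have : (2:ℕ) ≤ 2 ^ n := by
      calc (2:ℕ) = 2 ^ 1 := by norm_num
        _ ≤ 2 ^ n := Nat.pow_le_pow_right (by norm_num) (by omega)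
    omega
  · have hdn : d ≤ n := by omega
    have hA := sum_choose_bound n d hdn
    have hB := add_pow_le_three_pow_mul n d hdn
    set f := ∑ i ∈ range (d+1), n.choose i with hf
    have hnn : n ^ n = n ^ (n - d) * n ^ d := by
      rw [← pow_add]
      congr 1
      omega
    have step1 : n ^ (n - d) * (d ^ d * f) ≤ n ^ (n - d) * (3 ^ d * n ^ d) := by
      calc n ^ (n - d) * (d ^ d * f) = d ^ d * n ^ (n - d) * f := by ring
        _ ≤ (n + d) ^ n := hA
        _ ≤ 3 ^ d * n ^ n := hB
        _ = n ^ (n - d) * (3 ^ d * n ^ d) := by rw [hnn]; ring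
    have hnpos : 0 < n ^ (n - d) := Nat.pow_pos (by omega)
    have step2 : d ^ d * f ≤ 3 ^ d * n ^ d := Nat.le_of_mul_le_mul_left step1 hnpos
    have step3 : (d ^ d * f) ^ 2 ≤ (3 * n) ^ (2 * d) := by
      calc (d ^ d * f) ^ 2 ≤ (3 ^ d * n ^ d) ^ 2 := Nat.pow_le_pow_left step2 2
        _ = (3 * n) ^ (2 * d) := by ring
    have step4 : (3 * n) ^ (2 * d) < d ^ (2 * d) * 2 ^ n := key_lt d hd n hn
    have step5 : d ^ (2 * d) * f ^ 2 < d ^ (2 * d) * 2 ^ n := by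
      calc d ^ (2 * d) * f ^ 2 = (d ^ d * f) ^ 2 := by ring
        _ ≤ (3 * n) ^ (2 * d) := step3
        _ < d ^ (2 * d) * 2 ^ n := step4
    have hd2pos : 0 < d ^ (2 * d) := Nat.pow_pos (by omega)
    have : f ^ 2 < 2 ^ n := by
      exact Nat.lt_of_mul_lt_mul_left step5
    omega

/-- If a class `H` has VC dimension at most `d` (every shattered finite set has
cardinality at most `d`), then the class of pairwise intersections
`{A ∩ B : A, B ∈ H}` has VC dimension at most `10·d`. -/
theorem vc_of_intersections {α : Type*} (H : Set (Set α)) (d : ℕ)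
    (hH : ∀ S : Finset α, ShattersFam H S → S.card ≤ d) :
    ∀ S : Finset α, ShattersFam {C | ∃ A ∈ H, ∃ B ∈ H, C = A ∩ B} S →
      S.card ≤ 10 * d := by
  classical
  intro S hS
  set 𝒜 : Finset (Finset α) :=
    S.powerset.filter (fun t => ∃ A ∈ H, ∀ x ∈ S, x ∈ A ↔ x ∈ t) with h𝒜
  -- step 1 : 2 ^ |S| ≤ |𝒜|²
  have hmap : ∀ T ∈ S.powerset, ∃ p : Finset α × Finset α,
      p ∈ 𝒜 ×ˢ 𝒜 ∧ p.1 ∩ p.2 = T := by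
    intro T hT
    rw [Finset.mem_powerset] at hT
    obtain ⟨C, hC, hCT⟩ := hS T hT
    simp only [Set.mem_setOf_eq] at hC
    obtain ⟨A, hA, B, hB, rfl⟩ := hC
    have hmemA : S.filter (· ∈ A) ∈ 𝒜 := by
      rw [h𝒜, Finset.mem_filter]
      exact ⟨Finset.mem_powerset.2 (Finset.filter_subset _ _),
        ⟨A, hA, fun x hx => by simp [Finset.mem_filter, hx]⟩⟩
    have hmemB : S.filter (· ∈ B) ∈ 𝒜 := by
      rw [h𝒜, Finset.mem_filter]
      exact ⟨Finset.mem_powerset.2 (Finset.filter_subset _ _),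
        ⟨B, hB, fun x hx => by simp [Finset.mem_filter, hx]⟩⟩
    refine ⟨(S.filter (· ∈ A), S.filter (· ∈ B)), Finset.mem_product.2 ⟨hmemA, hmemB⟩, ?_⟩
    ext x
    simp only [Finset.mem_inter, Finset.mem_filter]
    constructor
    · rintro ⟨⟨hxS, hxA⟩, _, hxB⟩
      exact ((hCT x hxS).1 ⟨hxA, hxB⟩)
    · intro hxT
      have hxS : x ∈ S := hT hxT
      have := (hCT x hxS).2 hxT
      exact ⟨⟨hxS, this.1⟩, ⟨hxS, this.2⟩⟩
  choose! F hF1 hF2 using hmap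
  have hcard : 2 ^ S.card ≤ 𝒜.card ^ 2 := by
    have hinj : ∀ T₁ ∈ S.powerset, ∀ T₂ ∈ S.powerset, F T₁ = F T₂ → T₁ = T₂ := by
      intro T₁ h1 T₂ h2 he
      rw [← hF2 T₁ h1, ← hF2 T₂ h2, he]
    have := Finset.card_le_card_of_injOn F (fun T hT => hF1 T hT) hinj
    rw [Finset.card_powerset] at this
    rw [Finset.card_product] at this
    calc 2 ^ S.card ≤ 𝒜.card * 𝒜.card := this
      _ = 𝒜.card ^ 2 := by ring
  -- step 2 : |𝒜| ≤ ∑_{i ≤ d} C(|S|, i)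
  have hshat : 𝒜.shatterer ⊆ S.powerset.filter (fun t => t.card ≤ d) := by
    intro t ht
    rw [Finset.mem_shatterer] at ht
    have htS : t ⊆ S := by
      obtain ⟨u, hu, hsub⟩ := ht.exists_superset
      rw [h𝒜, Finset.mem_filter, Finset.mem_powerset] at hu
      exact hsub.trans hu.1
    have hfam : ShattersFam H t := by
      intro T hT
      obtain ⟨u, hu, hut⟩ := ht hT
      rw [h𝒜, Finset.mem_filter] at hu
      obtain ⟨-, A, hA, hAu⟩ := hu
      refine ⟨A, hA, fun x hx => ?_⟩
      have hxS : x ∈ S := htS hx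
      rw [hAu x hxS]
      constructor
      · intro hxu
        rw [← hut]
        exact Finset.mem_inter.2 ⟨hx, hxu⟩
      · intro hxT
        rw [← hut] at hxT
        exact (Finset.mem_inter.1 hxT).2
    rw [Finset.mem_filter, Finset.mem_powerset]
    exact ⟨htS, hH t hfam⟩
  have hAcard : 𝒜.card ≤ ∑ i ∈ Finset.range (d+1), (S.card).choose i := by
    calc 𝒜.card ≤ 𝒜.shatterer.card := Finset.card_le_card_shatterer 𝒜
      _ ≤ (S.powerset.filter (fun t => t.card ≤ d)).card := Finset.card_le_card hshat
      _ ≤ ((Finset.range (d+1)).biUnion (fun i => S.powersetCard i)).card := by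
          apply Finset.card_le_card
          intro t ht
          rw [Finset.mem_filter, Finset.mem_powerset] at ht
          rw [Finset.mem_biUnion]
          exact ⟨t.card, Finset.mem_range.2 (by omega),
            (Finset.mem_powersetCard).2 ⟨ht.1, rfl⟩⟩
      _ ≤ ∑ i ∈ Finset.range (d+1), (S.powersetCard i).card :=
          Finset.card_biUnion_le
      _ = ∑ i ∈ Finset.range (d+1), (S.card).choose i := by
          apply Finset.sum_congr rfl
          intro i _
          rw [Finset.card_powersetCard]
  -- step 3 : conclude
  apply le_ten_mul_of_two_pow_le
  calc 2 ^ S.card ≤ 𝒜.card ^ 2 := hcard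
    _ ≤ (∑ i ∈ Finset.range (d+1), (S.card).choose i) ^ 2 :=
        Nat.pow_le_pow_left hAcard 2
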